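/- For every x ∈ ℝ², the Gaussian field φ satisfies φ(x) = Σ_{α ∈ ℕ²} A_α h_α((x−s_B)/√δ), with the series absolutely convergent; moreover, for every p ∈ ℕ and every x ∈ ℝ², the truncation error obtained by retaining only the p² terms with α₁ < p and α₂ < p satisfies |Σ_{α : α₁ ≥ p or α₂ ≥ p} A_α h_α((x−s_B)/√δ)| ≤ K² Q_B (2 S_r(p) + T_r(p)) T_r(p), where K = 1.09. -/

import Mathlib

set_option maxHeartbeats 1000000


open MeasureTheory

/-- `ℝ²` with the Euclidean norm. -/
abbrev E2 : Type := EuclideanSpace ℝ (Fin 2)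

/-- The Hermite functions `h_n(x) = (-1)^n (d/dx)^n e^{-x^2}`. -/
noncomputable def hermiteF (n : ℕ) (x : ℝ) : ℝ :=
  (-1 : ℝ) ^ n * iteratedDeriv n (fun t => Real.exp (-t ^ 2)) x

/-- Two-dimensional Hermite functions `h_α(x₁,x₂) = h_{α₁}(x₁) h_{α₂}(x₂)`. -/
noncomputable def hermite2 (α : ℕ × ℕ) (x : E2) : ℝ :=
  hermiteF α.1 (x 0) * hermiteF α.2 (x 1)

/-- Multi-index power `x^α = x₁^{α₁} x₂^{α₂}`. -/
noncomputable def mpow (x : E2) (α : ℕ × ℕ) : ℝ :=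
  (x 0) ^ α.1 * (x 1) ^ α.2

/-- Multi-index factorial `α! = α₁!·α₂!` as a real number. -/
noncomputable def mfact (α : ℕ × ℕ) : ℝ :=
  (α.1.factorial : ℝ) * (α.2.factorial : ℝ)

/-- The closed square in `ℝ²` with center `c` and side length `s`. -/
def closedSquare (c : E2) (s : ℝ) : Set E2 :=
  {y | |y 0 - c 0| ≤ s / 2 ∧ |y 1 - c 1| ≤ s / 2}

/-- `S_r(p) = Σ_{n=0}^{p} r^n/√(n!)`. -/
noncomputable def Sr (r : ℝ) (p : ℕ) : ℝ :=
  ∑ n ∈ Finset.range (p + 1), r ^ n / Real.sqrt (n.factorial : ℝ)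

/-- `T_r(p) = Σ_{n=p}^{∞} r^n/√(n!)`. -/
noncomputable def Tr (r : ℝ) (p : ℕ) : ℝ :=
  ∑' n : ℕ, r ^ (n + p) / Real.sqrt (((n + p).factorial : ℝ))

/-- The Gaussian field `φ(x)` due to a smooth source `f` on the box `B` and point
sources of strengths `q j` at `Y j`. -/
noncomputable def gaussField (δ : ℝ) (B : Set E2) (f : E2 → ℝ) {N : ℕ}
    (Y : Fin N → E2) (q : Fin N → ℝ) (x : E2) : ℝ :=
  (∫ y in B, Real.exp (-‖x - y‖ ^ 2 / δ) * f y) +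
    ∑ j, q j * Real.exp (-‖x - Y j‖ ^ 2 / δ)

/-- The Hermite expansion coefficients `A_α` of the Gaussian field about `s_B`. -/
noncomputable def hermiteCoef (δ : ℝ) (sB : E2) (B : Set E2) (f : E2 → ℝ) {N : ℕ}
    (Y : Fin N → E2) (q : Fin N → ℝ) (α : ℕ × ℕ) : ℝ :=
  (1 / mfact α) *
    ((∫ y in B, mpow ((Real.sqrt δ)⁻¹ • (y - sB)) α * f y) +
      ∑ j, mpow ((Real.sqrt δ)⁻¹ • (Y j - sB)) α * q j)

/-- `Q_B = ∫_B |f| + Σ_j |q_j|`. -/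
noncomputable def sourceMass (B : Set E2) (f : E2 → ℝ) {N : ℕ} (q : Fin N → ℝ) : ℝ :=
  (∫ y in B, |f y|) + ∑ j, |q j|

namespace HermiteProof

/-- absolute moments of the Gaussian -/
noncomputable def MM (n : ℕ) : ℝ := ∫ s : ℝ, |s| ^ n * Real.exp (-s ^ 2)

noncomputable def mI (n : ℕ) : ℝ := ∫ s in Set.Ioi (0:ℝ), s ^ n * Real.exp (-s ^ 2)

lemma integrable_MM (n : ℕ) : Integrable fun s : ℝ => |s| ^ n * Real.exp (-s ^ 2) := by
  have h := (integrable_rpow_mul_exp_neg_mul_sq (b := 1) one_pos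
      (s := (n : ℝ)) (lt_of_lt_of_le neg_one_lt_zero (Nat.cast_nonneg n))).abs
  have he : (fun x : ℝ => |x ^ (n : ℝ) * Real.exp (-1 * x ^ 2)|)
      = fun s : ℝ => |s| ^ n * Real.exp (-s ^ 2) := by
    funext x
    rw [Real.rpow_natCast, abs_mul, abs_pow, Real.abs_exp, neg_one_mul]
  rwa [he] at h

lemma integrableOn_pow_gauss (n : ℕ) :
    IntegrableOn (fun s : ℝ => s ^ n * Real.exp (-s ^ 2)) (Set.Ioi 0) := by
  refine ((integrable_MM n).integrableOn).congr_fun ?_ measurableSet_Ioi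
  intro x hx
  dsimp only
  rw [abs_of_pos hx]

lemma tendsto_pow_gauss (k : ℕ) :
    Filter.Tendsto (fun x : ℝ => x ^ k * Real.exp (-x ^ 2)) Filter.atTop (nhds 0) := by
  have h := rpow_mul_exp_neg_mul_sq_isLittleO_exp_neg (b := 1) one_pos (k : ℝ)
  have h2 : Filter.Tendsto (fun x : ℝ => Real.exp (-(1/2) * x)) Filter.atTop (nhds 0) := by
    apply Real.tendsto_exp_atBot.comp
    have h0 : Filter.Tendsto (fun x : ℝ => (1/2 : ℝ) * x) Filter.atTop Filter.atTop :=
      Filter.Tendsto.const_mul_atTop (by norm_num) Filter.tendsto_id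
    have h1 := Filter.tendsto_neg_atTop_atBot.comp h0
    exact h1.congr (fun x => by simp [Function.comp_def, neg_mul])
  have h3 := h.trans_tendsto h2
  refine h3.congr (fun x => ?_)
  rw [Real.rpow_natCast, neg_one_mul]

lemma mI_rec (n : ℕ) : ((n : ℝ) + 1) * mI n = 2 * mI (n + 2) := by
  have hf : ∀ x ∈ Set.Ioi (0:ℝ), HasDerivAt (fun x : ℝ => x ^ (n+1) * Real.exp (-x ^ 2))
      (((n : ℝ)+1) * (x ^ n * Real.exp (-x ^ 2)) - 2 * (x ^ (n+2) * Real.exp (-x ^ 2))) x := by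
    intro x _
    have h1 : HasDerivAt (fun x : ℝ => x ^ (n+1)) (((n:ℝ)+1) * x ^ n) x := by
      simpa using hasDerivAt_pow (n+1) x
    have hx : HasDerivAt (fun x : ℝ => -x ^ 2) (-(2 * x)) x := by
      simpa using (hasDerivAt_pow 2 x).fun_neg
    have h2 : HasDerivAt (fun x : ℝ => Real.exp (-x ^ 2)) (Real.exp (-x^2) * -(2*x)) x :=
      (Real.hasDerivAt_exp _).comp x hx
    have := h1.mul h2
    exact this.congr_deriv (by ring)
  have hint : IntegrableOn (fun x : ℝ =>
      ((n : ℝ)+1) * (x ^ n * Real.exp (-x ^ 2)) - 2 * (x ^ (n+2) * Real.exp (-x ^ 2)))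
      (Set.Ioi 0) :=
    ((integrableOn_pow_gauss n).const_mul _).sub ((integrableOn_pow_gauss (n+2)).const_mul _)
  have key := integral_Ioi_of_hasDerivAt_of_tendsto
    (f := fun x : ℝ => x ^ (n+1) * Real.exp (-x ^ 2))
    ((by fun_prop : Continuous fun x : ℝ => x ^ (n+1) * Real.exp (-x ^ 2)).continuousWithinAt) hf hint (tendsto_pow_gauss (n+1))
  rw [integral_sub ((integrableOn_pow_gauss n).const_mul _)
      ((integrableOn_pow_gauss (n+2)).const_mul _),
      integral_const_mul, integral_const_mul] at key
  have key2 : ((n : ℝ)+1) * mI n - 2 * mI (n+2) = 0 := by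
    rw [mI, mI]
    simpa using key
  linarith

lemma MM_eq (n : ℕ) : MM n = 2 * mI n := by
  rw [MM, mI, ← integral_comp_abs (f := fun t : ℝ => t ^ n * Real.exp (-t ^ 2))]
  congr 1
  funext x
  rw [sq_abs]

lemma MM_zero : MM 0 = Real.sqrt Real.pi := by
  have h := integral_gaussian 1
  simp only [MM, pow_zero, one_mul]
  simpa [neg_one_mul] using h

lemma mI_one : mI 1 = 1/2 := by
  have hf : ∀ x ∈ Set.Ioi (0:ℝ), HasDerivAt (fun x : ℝ => -(1/2) * Real.exp (-x ^ 2))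
      (x ^ 1 * Real.exp (-x ^ 2)) x := by
    intro x _
    have hx : HasDerivAt (fun x : ℝ => -x ^ 2) (-(2 * x)) x := by
      simpa using (hasDerivAt_pow 2 x).fun_neg
    have h2 : HasDerivAt (fun x : ℝ => Real.exp (-x ^ 2)) (Real.exp (-x^2) * -(2*x)) x :=
      (Real.hasDerivAt_exp _).comp x hx
    have := h2.const_mul (-(1/2) : ℝ)
    exact this.congr_deriv (by ring)
  have htend : Filter.Tendsto (fun x : ℝ => -(1/2) * Real.exp (-x ^ 2))
      Filter.atTop (nhds 0) := by
    have := (tendsto_pow_gauss 0).const_mul (-(1/2) : ℝ)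
    simpa using this
  have key := integral_Ioi_of_hasDerivAt_of_tendsto
    (f := fun x : ℝ => -(1/2) * Real.exp (-x ^ 2)) ((by fun_prop : Continuous fun x : ℝ => -(1/2) * Real.exp (-x ^ 2)).continuousWithinAt) hf
    (integrableOn_pow_gauss 1) htend
  rw [mI]
  rw [key]
  simp

lemma MM_rec (n : ℕ) : MM (n+2) = (((n:ℝ)+1)/2) * MM n := by
  rw [MM_eq, MM_eq, ← mI_rec]
  ring

lemma MM_nonneg (n : ℕ) : 0 ≤ MM n :=
  integral_nonneg (fun x => by positivity)

lemma moment_bound (n : ℕ) : 2^n * MM n ≤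
    1.09 * Real.sqrt Real.pi * Real.sqrt 2 ^ n * Real.sqrt (n.factorial) := by
  induction n using Nat.twoStepInduction with
  | zero =>
    rw [MM_zero]
    simp only [pow_zero, one_mul, Nat.factorial_zero, Nat.cast_one, Real.sqrt_one, mul_one]
    nlinarith [Real.sqrt_nonneg Real.pi]
  | one =>
    have hMM1 : MM 1 = 1 := by rw [MM_eq, mI_one]; norm_num
    rw [hMM1]
    simp only [pow_one, Nat.factorial_one, Nat.cast_one, Real.sqrt_one, mul_one]
    have hp : Real.sqrt Real.pi ^ 2 = Real.pi := Real.sq_sqrt Real.pi_pos.le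
    have h2 : Real.sqrt 2 ^ 2 = 2 := Real.sq_sqrt (by norm_num)
    nlinarith [Real.pi_gt_three, Real.sqrt_nonneg Real.pi, Real.sqrt_nonneg 2,
      mul_nonneg (Real.sqrt_nonneg Real.pi) (Real.sqrt_nonneg 2)]
  | more n ih _ =>
    rw [MM_rec]
    have hfac : Real.sqrt ((n+2).factorial : ℝ)
        = Real.sqrt (((n:ℝ)+2) * ((n:ℝ)+1)) * Real.sqrt (n.factorial : ℝ) := by
      rw [← Real.sqrt_mul (by positivity)]
      congr 1
      rw [Nat.factorial_succ, Nat.factorial_succ]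
      push_cast
      ring
    have hs2 : Real.sqrt 2 ^ (n+2) = 2 * Real.sqrt 2 ^ n := by
      rw [pow_add, Real.sq_sqrt (by norm_num : (0:ℝ) ≤ 2)]
      ring
    have hge : ((n:ℝ)+1) ≤ Real.sqrt (((n:ℝ)+2) * ((n:ℝ)+1)) := by
      nth_rewrite 1 [show ((n:ℝ)+1) = Real.sqrt (((n:ℝ)+1) * ((n:ℝ)+1)) by
        rw [Real.sqrt_mul_self (by positivity)]]
      apply Real.sqrt_le_sqrt
      nlinarith [Nat.cast_nonneg (α := ℝ) n]
    have hSnonneg : (0:ℝ) ≤ 1.09 * Real.sqrt Real.pi * Real.sqrt 2 ^ n * Real.sqrt (n.factorial) := by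
      positivity
    calc 2^(n+2) * ((((n:ℝ)+1)/2) * MM n)
        = 2*((n:ℝ)+1) * (2^n * MM n) := by ring
      _ ≤ 2*((n:ℝ)+1) * (1.09 * Real.sqrt Real.pi * Real.sqrt 2 ^ n * Real.sqrt (n.factorial)) := by
          apply mul_le_mul_of_nonneg_left ih (by positivity)
      _ ≤ 2*Real.sqrt (((n:ℝ)+2) * ((n:ℝ)+1))
            * (1.09 * Real.sqrt Real.pi * Real.sqrt 2 ^ n * Real.sqrt (n.factorial)) := by
          apply mul_le_mul_of_nonneg_right _ hSnonneg
          linarith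
      _ = 1.09 * Real.sqrt Real.pi * Real.sqrt 2 ^ (n+2) * Real.sqrt ((n+2).factorial : ℝ) := by
          rw [hfac, hs2]; ring

noncomputable def Phi (n : ℕ) (x : ℝ) : ℂ :=
  ∫ s : ℝ, (2 * Complex.I * s) ^ n * Complex.exp (-(s:ℂ) ^ 2 + 2 * Complex.I * s * x)

lemma norm_integrand (n : ℕ) (x s : ℝ) :
    ‖(2 * Complex.I * s) ^ n * Complex.exp (-(s:ℂ) ^ 2 + 2 * Complex.I * s * x)‖
      = 2 ^ n * (|s| ^ n * Real.exp (-s ^ 2)) := by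
  rw [norm_mul, norm_pow]
  have h1 : ‖2 * Complex.I * (s:ℂ)‖ = 2 * |s| := by
    rw [norm_mul, norm_mul, Complex.norm_I]
    simp [Complex.norm_real]
  have harg : (-(s:ℂ) ^ 2 + 2 * Complex.I * s * x) =
      Complex.ofReal (-s^2) + Complex.ofReal (2*s*x) * Complex.I := by
    push_cast
    ring
  rw [h1, harg, Complex.norm_exp]
  have : (Complex.ofReal (-s^2) + Complex.ofReal (2*s*x) * Complex.I).re = -s^2 := by simp [← Complex.ofReal_pow]
  rw [this, mul_pow]
  ring

lemma integrand_integrable (n : ℕ) (x : ℝ) :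
    Integrable (fun s : ℝ => (2 * Complex.I * s) ^ n
      * Complex.exp (-(s:ℂ) ^ 2 + 2 * Complex.I * s * x)) := by
  refine ((integrable_MM n).const_mul (2^n)).mono' ?_ ?_
  · apply Continuous.aestronglyMeasurable
    fun_prop
  · filter_upwards with s
    rw [norm_integrand]

lemma hasDerivAt_Phi (n : ℕ) (x : ℝ) : HasDerivAt (Phi n) (Phi (n+1) x) x := by
  have key := hasDerivAt_integral_of_dominated_loc_of_deriv_le (s := Metric.ball x 1) (Metric.ball_mem_nhds x one_pos)
    (F := fun (x : ℝ) (s : ℝ) => (2 * Complex.I * s) ^ n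
      * Complex.exp (-(s:ℂ) ^ 2 + 2 * Complex.I * s * x))
    (F' := fun (x : ℝ) (s : ℝ) => (2 * Complex.I * s) ^ (n+1)
      * Complex.exp (-(s:ℂ) ^ 2 + 2 * Complex.I * s * x))
    (bound := fun s : ℝ => 2^(n+1) * (|s| ^ (n+1) * Real.exp (-s ^ 2)))
    (x₀ := x) ?_ (integrand_integrable n x) ?_ ?_ ?_ ?_
  · exact key.2
  · filter_upwards with y
    apply Continuous.aestronglyMeasurable
    fun_prop
  · apply Continuous.aestronglyMeasurable
    fun_prop
  · filter_upwards with s y _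
    rw [norm_integrand]
  · exact (integrable_MM (n+1)).const_mul _
  · filter_upwards with s y _
    have hw : HasDerivAt (fun z : ℂ => (2 * Complex.I * s) ^ n
        * Complex.exp (-(s:ℂ) ^ 2 + 2 * Complex.I * s * z))
        ((2 * Complex.I * s) ^ n * (Complex.exp (-(s:ℂ) ^ 2 + 2 * Complex.I * s * y)
          * (2 * Complex.I * s))) (y : ℂ) := by
      have hlin : HasDerivAt (fun z : ℂ => -(s:ℂ) ^ 2 + 2 * Complex.I * s * z)
          (2 * Complex.I * s) (y : ℂ) := by
        simpa using ((hasDerivAt_id (y:ℂ)).const_mul (2 * Complex.I * s)).const_add (-(s:ℂ)^2)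
      exact ((Complex.hasDerivAt_exp _).comp _ hlin).const_mul _
    have := (hw.comp_ofReal)
    exact this.congr_deriv (by rw [pow_succ]; ring)

lemma Phi_zero (x : ℝ) : Phi 0 x = (Real.sqrt Real.pi : ℝ) * Complex.exp (-(x:ℂ)^2) := by
  have h := fourierIntegral_gaussian (b := 1) (by norm_num) (2 * (x:ℂ))
  rw [Phi]
  have he : ∀ s : ℝ, (2*Complex.I*(s:ℂ))^0 * Complex.exp (-(s:ℂ)^2 + 2*Complex.I*s*x)
      = Complex.exp (Complex.I * (2*(x:ℂ)) * s) * Complex.exp (-1 * (s:ℂ)^2) := by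
    intro s
    rw [pow_zero, one_mul, ← Complex.exp_add]
    congr 1
    ring
  simp_rw [he]
  rw [h]
  have h1 : ((Real.pi : ℂ)/1) ^ (1/2 : ℂ) = (Real.sqrt Real.pi : ℂ) := by
    rw [div_one, Real.sqrt_eq_rpow]
    rw [show ((1/2 : ℂ)) = ((1/2 : ℝ) : ℂ) by norm_num]
    rw [← Complex.ofReal_cpow Real.pi_pos.le]
  have h2 : -(2*(x:ℂ))^2/(4*1) = -(x:ℂ)^2 := by ring
  rw [h1, h2]

lemma Phi_zero_re (x : ℝ) : (Phi 0 x).re = Real.sqrt Real.pi * Real.exp (-x^2) := by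
  rw [Phi_zero]
  have : Complex.exp (-(x:ℂ)^2) = ((Real.exp (-x^2) : ℝ) : ℂ) := by
    push_cast
    ring_nf
  rw [this, ← Complex.ofReal_mul, Complex.ofReal_re]

lemma iteratedDeriv_gauss (n : ℕ) : ∀ x : ℝ,
    iteratedDeriv n (fun t : ℝ => Real.exp (-t^2)) x
      = (Real.sqrt Real.pi)⁻¹ * (Phi n x).re := by
  have hpi : Real.sqrt Real.pi ≠ 0 := by positivity
  induction n with
  | zero =>
    intro x
    rw [iteratedDeriv_zero, Phi_zero_re]
    field_simp
  | succ n ih =>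
    intro x
    rw [iteratedDeriv_succ, funext ih]
    have h2 := Complex.reCLM.hasFDerivAt.comp_hasDerivAt x (hasDerivAt_Phi n x)
    simp only [Complex.reCLM_apply, Function.comp_def] at h2
    exact (h2.const_mul _).deriv

lemma hermiteF_eq (n : ℕ) (x : ℝ) :
    hermiteF n x = (-1:ℝ)^n * ((Real.sqrt Real.pi)⁻¹ * (Phi n x).re) := by
  rw [hermiteF, iteratedDeriv_gauss]

lemma norm_Phi_le (n : ℕ) (x : ℝ) : ‖Phi n x‖ ≤ 2^n * MM n := by
  refine le_trans (norm_integral_le_integral_norm _) (le_of_eq ?_)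
  simp_rw [norm_integrand]
  rw [integral_const_mul, ← MM]

lemma hermiteF_bound (n : ℕ) (x : ℝ) :
    |hermiteF n x| ≤ 1.09 * Real.sqrt 2 ^ n * Real.sqrt (n.factorial : ℝ) := by
  have hpi : (0:ℝ) < Real.sqrt Real.pi := Real.sqrt_pos.mpr Real.pi_pos
  rw [hermiteF_eq, abs_mul, abs_pow, abs_neg, abs_one, one_pow, one_mul, abs_mul,
    abs_inv, abs_of_pos hpi]
  have h1 : |(Phi n x).re| ≤ 2^n * MM n := by
    refine le_trans ?_ (norm_Phi_le n x)
    exact Complex.abs_re_le_norm _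
  calc (Real.sqrt Real.pi)⁻¹ * |(Phi n x).re|
      ≤ (Real.sqrt Real.pi)⁻¹ * (2^n * MM n) := by
        exact mul_le_mul_of_nonneg_left h1 (by positivity)
    _ ≤ (Real.sqrt Real.pi)⁻¹ *
        (1.09 * Real.sqrt Real.pi * Real.sqrt 2 ^ n * Real.sqrt (n.factorial : ℝ)) := by
        exact mul_le_mul_of_nonneg_left (moment_bound n) (by positivity)
    _ = 1.09 * Real.sqrt 2 ^ n * Real.sqrt (n.factorial : ℝ) := by
        field_simp

lemma sqrt_factorial_pos (n : ℕ) : (0:ℝ) < Real.sqrt (n.factorial : ℝ) :=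
  Real.sqrt_pos.mpr (by exact_mod_cast n.factorial_pos)

lemma summable_aux {c : ℝ} (hc : 0 ≤ c) :
    Summable (fun n : ℕ => c ^ n / Real.sqrt (n.factorial : ℝ)) := by
  apply summable_of_ratio_norm_eventually_le (r := 1/2) (by norm_num)
  filter_upwards [Filter.eventually_ge_atTop ⌈4*c^2⌉₊] with n hn
  have hn' : 4*c^2 ≤ (n : ℝ) := le_trans (Nat.le_ceil _) (by exact_mod_cast hn)
  have e1 : Real.sqrt (((n+1).factorial : ℝ)) = Real.sqrt ((n:ℝ)+1) * Real.sqrt (n.factorial : ℝ) := by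
    rw [← Real.sqrt_mul (by positivity)]
    congr 1
    rw [Nat.factorial_succ]
    push_cast
    ring
  have hc2 : c / Real.sqrt ((n:ℝ)+1) ≤ 1/2 := by
    rw [div_le_iff₀ (by positivity)]
    have : c ≤ Real.sqrt ((((n:ℝ)+1)/4)) := by
      rw [show c = Real.sqrt (c^2) by rw [Real.sqrt_sq hc]]
      apply Real.sqrt_le_sqrt
      linarith
    refine le_trans this (le_of_eq ?_)
    rw [show (((n:ℝ)+1)/4) = ((n:ℝ)+1) * (1/2)^2 by ring, Real.sqrt_mul (by positivity),
      Real.sqrt_sq (by norm_num)]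
    ring
  rw [Real.norm_eq_abs, Real.norm_eq_abs, abs_of_nonneg (by positivity),
    abs_of_nonneg (by positivity), e1, pow_succ]
  rw [show c^n * c / (Real.sqrt ((n:ℝ)+1) * Real.sqrt (n.factorial : ℝ))
      = (c / Real.sqrt ((n:ℝ)+1)) * (c^n / Real.sqrt (n.factorial : ℝ)) by ring]
  exact mul_le_mul_of_nonneg_right hc2 (by positivity)

lemma div_sq_helper (a c s : ℝ) (hs : 0 < s) : a / (s * s) * (c * s) = c * (a / s) := by
  field_simp

lemma oneD (x t : ℝ) :
    HasSum (fun n : ℕ => hermiteF n x * t ^ n / (n.factorial : ℝ))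
      (Real.exp (-(x - t) ^ 2)) := by
  have hpi : (0:ℝ) < Real.sqrt Real.pi := Real.sqrt_pos.mpr Real.pi_pos
  set F : ℕ → ℝ → ℂ := fun n s => (((-t : ℝ) : ℂ)) ^ n / (n.factorial : ℂ) *
    ((2*Complex.I*s)^n * Complex.exp (-(s:ℂ)^2 + 2*Complex.I*s*x)) with hF
  have hInt : ∀ n, Integrable (F n) := fun n => (integrand_integrable n x).const_mul _
  have hNormF : ∀ n s, ‖F n s‖
      = |t|^n / (n.factorial : ℝ) * (2^n * (|s|^n * Real.exp (-s^2))) := by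
    intro n s
    rw [hF]
    simp only []
    rw [norm_mul, norm_div, norm_pow, norm_integrand]
    congr 2
    · rw [Complex.norm_real, Real.norm_eq_abs, abs_neg]
    · rw [Complex.norm_natCast]
  have hIntNorm : ∀ n, (∫ s : ℝ, ‖F n s‖) = |t|^n / (n.factorial : ℝ) * (2^n * MM n) := by
    intro n
    simp_rw [hNormF]
    rw [integral_const_mul, integral_const_mul, MM]
  have hb : ∀ n : ℕ, |t|^n / (n.factorial : ℝ) * (2^n * MM n)
      ≤ (1.09 * Real.sqrt Real.pi) * ((Real.sqrt 2 * |t|)^n / Real.sqrt (n.factorial : ℝ)) := by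
    intro n
    have h := moment_bound n
    have hfacpos : (0:ℝ) < (n.factorial : ℝ) := by exact_mod_cast n.factorial_pos
    have hfac : (n.factorial : ℝ) = Real.sqrt (n.factorial : ℝ) * Real.sqrt (n.factorial : ℝ) :=
      (Real.mul_self_sqrt (by positivity)).symm
    calc |t|^n / (n.factorial : ℝ) * (2^n * MM n)
        ≤ |t|^n / (n.factorial : ℝ) *
            (1.09 * Real.sqrt Real.pi * Real.sqrt 2 ^ n * Real.sqrt (n.factorial : ℝ)) :=
          mul_le_mul_of_nonneg_left h (by positivity)
      _ = (1.09 * Real.sqrt Real.pi) * ((Real.sqrt 2 * |t|)^n / Real.sqrt (n.factorial : ℝ)) := by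
          rw [mul_pow]
          have step : |t|^n / (n.factorial : ℝ) *
              (1.09 * Real.sqrt Real.pi * Real.sqrt 2 ^ n * Real.sqrt (n.factorial : ℝ))
              = |t|^n / (n.factorial : ℝ) * ((1.09 * Real.sqrt Real.pi * Real.sqrt 2 ^ n) *
                Real.sqrt (n.factorial : ℝ)) := by ring
          rw [step]
          nth_rewrite 1 [hfac]
          rw [div_sq_helper _ _ _ (sqrt_factorial_pos n)]
          ring
  have hSum : Summable (fun n => ∫ s : ℝ, ‖F n s‖) := by
    refine Summable.of_nonneg_of_le (fun n => integral_nonneg (fun s => norm_nonneg _))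
      (fun n => ?_) (((summable_aux (by positivity : (0:ℝ) ≤ Real.sqrt 2 * |t|)).mul_left
        (1.09 * Real.sqrt Real.pi)))
    rw [hIntNorm n]
    exact hb n
  have key := hasSum_integral_of_summable_integral_norm hInt hSum
  have hpt : ∀ s : ℝ, (∑' n, F n s)
      = Complex.exp (-(s:ℂ)^2 + 2*Complex.I*s*(((x - t : ℝ)):ℂ)) := by
    intro s
    have hz := NormedSpace.expSeries_div_hasSum_exp (((-t:ℝ):ℂ) * (2*Complex.I*s))
    rw [← Complex.exp_eq_exp_ℂ] at hz
    have hzz := hz.mul_right (Complex.exp (-(s:ℂ)^2 + 2*Complex.I*s*x))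
    have hfe : (fun n => F n s) = fun n => ((((-t:ℝ):ℂ) * (2*Complex.I*s))^n / (n.factorial : ℂ))
        * Complex.exp (-(s:ℂ)^2 + 2*Complex.I*s*x) := by
      funext n
      rw [hF]
      simp only [mul_pow]
      ring
    have h2 : HasSum (fun n => F n s) (Complex.exp (((-t:ℝ):ℂ) * (2*Complex.I*s))
        * Complex.exp (-(s:ℂ)^2 + 2*Complex.I*s*x)) := by
      rw [hfe]; exact hzz
    rw [h2.tsum_eq, ← Complex.exp_add]
    congr 1
    push_cast
    ring
  have hIv : (∫ s : ℝ, ∑' n, F n s)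
      = ((Real.sqrt Real.pi : ℝ) : ℂ) * Complex.exp (-(((x - t : ℝ)):ℂ)^2) := by
    rw [show (fun s : ℝ => ∑' n, F n s)
        = fun s : ℝ => Complex.exp (-(s:ℂ)^2 + 2*Complex.I*s*(((x - t : ℝ)):ℂ)) from
      funext hpt]
    have h0 := Phi_zero (x - t)
    rw [Phi] at h0
    simp only [pow_zero, one_mul] at h0
    exact h0
  rw [hIv] at key
  have hIF : ∀ n, (∫ s : ℝ, F n s) = (((-t:ℝ):ℂ))^n / (n.factorial : ℂ) * Phi n x := by
    intro n
    rw [hF, Phi]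
    exact integral_const_mul _ _
  rw [funext hIF] at key
  have keyre := Complex.hasSum_re key
  have hterm : ∀ n : ℕ, ((((-t:ℝ):ℂ))^n / (n.factorial : ℂ) * Phi n x).re
      = (-t)^n / (n.factorial : ℝ) * (Phi n x).re := by
    intro n
    rw [show (((-t:ℝ):ℂ))^n / (n.factorial : ℂ) = ((((-t)^n / (n.factorial : ℝ)) : ℝ) : ℂ) by
      push_cast; ring]
    exact Complex.re_ofReal_mul _ _
  rw [funext hterm] at keyre
  have hre2 : ((((Real.sqrt Real.pi : ℝ)):ℂ) * Complex.exp (-(((x - t : ℝ)):ℂ)^2)).re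
      = Real.sqrt Real.pi * Real.exp (-(x-t)^2) := by
    have : Complex.exp (-(((x - t : ℝ)):ℂ)^2) = ((Real.exp (-(x-t)^2) : ℝ) : ℂ) := by
      push_cast
      ring_nf
    rw [this, ← Complex.ofReal_mul, Complex.ofReal_re]
  rw [hre2] at keyre
  have hdiv := keyre.div_const (Real.sqrt Real.pi)
  have hfin : (fun n => (-t)^n / (n.factorial : ℝ) * (Phi n x).re / Real.sqrt Real.pi)
      = fun n : ℕ => hermiteF n x * t ^ n / (n.factorial : ℝ) := by
    funext n
    rw [hermiteF_eq, neg_pow]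
    have hfacpos : (0:ℝ) < (n.factorial : ℝ) := by exact_mod_cast n.factorial_pos
    field_simp
  rw [hfin] at hdiv
  rwa [mul_comm, mul_div_assoc, div_self (ne_of_gt hpi), mul_one] at hdiv

lemma sqrt_div_factorial (n : ℕ) :
    Real.sqrt (n.factorial : ℝ) / (n.factorial : ℝ) = 1 / Real.sqrt (n.factorial : ℝ) := by
  have h := Real.mul_self_sqrt (le_of_lt (by exact_mod_cast n.factorial_pos : (0:ℝ) < n.factorial))
  rw [div_eq_div_iff (by exact_mod_cast n.factorial_pos : (0:ℝ) < (n.factorial:ℝ)).ne'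
    (sqrt_factorial_pos n).ne', one_mul, h]

lemma oneD_term_bound (x v : ℝ) (n : ℕ) :
    |hermiteF n x * v ^ n / (n.factorial : ℝ)|
      ≤ 1.09 * ((Real.sqrt 2 * |v|) ^ n / Real.sqrt (n.factorial : ℝ)) := by
  have hfacpos : (0:ℝ) < (n.factorial : ℝ) := by exact_mod_cast n.factorial_pos
  rw [abs_div, abs_mul, abs_pow, Nat.abs_cast]
  calc |hermiteF n x| * |v| ^ n / (n.factorial : ℝ)
      ≤ (1.09 * Real.sqrt 2 ^ n * Real.sqrt (n.factorial : ℝ)) * |v| ^ n / (n.factorial : ℝ) :=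
        (div_le_div_iff_of_pos_right hfacpos).mpr
          (mul_le_mul_of_nonneg_right (hermiteF_bound n x) (by positivity))
    _ = 1.09 * ((Real.sqrt 2 * |v|) ^ n)
          * (Real.sqrt (n.factorial : ℝ) / (n.factorial : ℝ)) := by
        rw [mul_pow]; ring
    _ = 1.09 * ((Real.sqrt 2 * |v|) ^ n / Real.sqrt (n.factorial : ℝ)) := by
        rw [sqrt_div_factorial]; ring

lemma oneD_summable_abs (x v : ℝ) :
    Summable fun n : ℕ => |hermiteF n x * v ^ n / (n.factorial : ℝ)| := by
  refine Summable.of_nonneg_of_le (fun n => abs_nonneg _) (fun n => oneD_term_bound x v n) ?_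
  exact (summable_aux (by positivity : (0:ℝ) ≤ Real.sqrt 2 * |v|)).mul_left 1.09

lemma cb1 {r : ℝ} (hr : 0 < r) (u : ℝ) (n : ℕ) :
    |hermiteF n u| * ((r/2) ^ n / (n.factorial : ℝ))
      ≤ 1.09 * r ^ n / Real.sqrt (n.factorial : ℝ) := by
  have hfacpos : (0:ℝ) < (n.factorial : ℝ) := by exact_mod_cast n.factorial_pos
  have hs2 : Real.sqrt 2 * (r/2) ≤ r := by
    have h2 : Real.sqrt 2 ≤ 2 := by
      nlinarith [Real.sq_sqrt (by norm_num : (0:ℝ) ≤ 2), Real.sqrt_nonneg 2]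
    nlinarith
  calc |hermiteF n u| * ((r/2) ^ n / (n.factorial : ℝ))
      ≤ (1.09 * Real.sqrt 2 ^ n * Real.sqrt (n.factorial : ℝ)) * ((r/2) ^ n / (n.factorial : ℝ)) :=
        mul_le_mul_of_nonneg_right (hermiteF_bound n u) (by positivity)
    _ = 1.09 * ((Real.sqrt 2 * (r/2)) ^ n)
          * (Real.sqrt (n.factorial : ℝ) / (n.factorial : ℝ)) := by
        rw [mul_pow]; ring
    _ ≤ 1.09 * (r ^ n) * (Real.sqrt (n.factorial : ℝ) / (n.factorial : ℝ)) := by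
        have hp : (Real.sqrt 2 * (r/2))^n ≤ r^n := pow_le_pow_left₀ (by positivity) hs2 n
        exact mul_le_mul_of_nonneg_right
          (mul_le_mul_of_nonneg_left hp (by norm_num)) (by positivity)
    _ = 1.09 * r ^ n / Real.sqrt (n.factorial : ℝ) := by
        rw [sqrt_div_factorial]; ring

end HermiteProof

/-- Lemma 3.1: the Gaussian field equals its (absolutely convergent) Hermite expansion
about the box center, and the error of truncation to the `p²` terms with `α₁ < p`,
`α₂ < p` is bounded by `K² Q_B (2 S_r(p) + T_r(p)) T_r(p)` with `K = 1.09`. -/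
theorem hermite_expansion_of_gaussField (δ r : ℝ) (hδ : 0 < δ) (hr : 0 < r) (sB : E2)
    (f : E2 → ℝ) (hf : IntegrableOn f (closedSquare sB (r * Real.sqrt δ)))
    (N : ℕ) (Y : Fin N → E2) (hY : ∀ j, Y j ∈ closedSquare sB (r * Real.sqrt δ))
    (q : Fin N → ℝ) :
    (∀ x : E2, Summable fun α : ℕ × ℕ =>
        |hermiteCoef δ sB (closedSquare sB (r * Real.sqrt δ)) f Y q α *
          hermite2 α ((Real.sqrt δ)⁻¹ • (x - sB))|) ∧
    (∀ x : E2,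
        gaussField δ (closedSquare sB (r * Real.sqrt δ)) f Y q x =
          ∑' α : ℕ × ℕ, hermiteCoef δ sB (closedSquare sB (r * Real.sqrt δ)) f Y q α *
            hermite2 α ((Real.sqrt δ)⁻¹ • (x - sB))) ∧
    (∀ p : ℕ, ∀ x : E2,
        |∑' α : ℕ × ℕ,
            if p ≤ α.1 ∨ p ≤ α.2 then
              hermiteCoef δ sB (closedSquare sB (r * Real.sqrt δ)) f Y q α *
                hermite2 α ((Real.sqrt δ)⁻¹ • (x - sB))
            else 0| ≤
          1.09 ^ 2 * sourceMass (closedSquare sB (r * Real.sqrt δ)) f q *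
            (2 * Sr r p + Tr r p) * Tr r p) := by
  have hδs : (0:ℝ) < Real.sqrt δ := Real.sqrt_pos.mpr hδ
  set B := closedSquare sB (r * Real.sqrt δ) with hBdef
  have hcoord : ∀ (w z : E2) (i : Fin 2),
      ((Real.sqrt δ)⁻¹ • (w - z)) i = (Real.sqrt δ)⁻¹ * (w i - z i) := by
    intro w z i
    simp [PiLp.smul_apply, PiLp.sub_apply]
  have hBmeas : MeasurableSet B := by
    rw [hBdef, closedSquare, Set.setOf_and]
    apply IsClosed.measurableSet
    have h0 : Continuous fun y : E2 => |y 0 - sB 0| := by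
      fun_prop
    have h1 : Continuous fun y : E2 => |y 1 - sB 1| := by
      fun_prop
    exact (isClosed_le h0 continuous_const).inter (isClosed_le h1 continuous_const)
  -- the 2-D expansion, for every x y
  have expand : ∀ x y : E2, HasSum
      (fun α : ℕ×ℕ => hermite2 α ((Real.sqrt δ)⁻¹ • (x - sB)) *
        mpow ((Real.sqrt δ)⁻¹ • (y - sB)) α / mfact α)
      (Real.exp (-‖x - y‖ ^ 2 / δ)) := by
    intro x y
    have h1 := HermiteProof.oneD ((Real.sqrt δ)⁻¹ * (x 0 - sB 0)) ((Real.sqrt δ)⁻¹ * (y 0 - sB 0))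
    have h2 := HermiteProof.oneD ((Real.sqrt δ)⁻¹ * (x 1 - sB 1)) ((Real.sqrt δ)⁻¹ * (y 1 - sB 1))
    have hs : Summable (fun α : ℕ×ℕ =>
        (hermiteF α.1 ((Real.sqrt δ)⁻¹ * (x 0 - sB 0)) *
          ((Real.sqrt δ)⁻¹ * (y 0 - sB 0)) ^ α.1 / (α.1.factorial : ℝ)) *
        (hermiteF α.2 ((Real.sqrt δ)⁻¹ * (x 1 - sB 1)) *
          ((Real.sqrt δ)⁻¹ * (y 1 - sB 1)) ^ α.2 / (α.2.factorial : ℝ))) := by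
      apply Summable.of_abs
      have habs := Summable.mul_of_nonneg
        (HermiteProof.oneD_summable_abs ((Real.sqrt δ)⁻¹ * (x 0 - sB 0)) ((Real.sqrt δ)⁻¹ * (y 0 - sB 0)))
        (HermiteProof.oneD_summable_abs ((Real.sqrt δ)⁻¹ * (x 1 - sB 1)) ((Real.sqrt δ)⁻¹ * (y 1 - sB 1)))
        (fun n => abs_nonneg _) (fun n => abs_nonneg _)
      exact habs.congr (fun α => (abs_mul _ _).symm)
    have hprod := h1.mul h2 hs
    have hn : ‖x - y‖^2 = (x 0 - y 0)^2 + (x 1 - y 1)^2 := by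
      rw [EuclideanSpace.norm_eq, Real.sq_sqrt (by positivity)]
      simp [Fin.sum_univ_two, PiLp.sub_apply, sq_abs]
    have hd : (Real.sqrt δ)^2 = δ := Real.sq_sqrt hδ.le
    have hval : Real.exp (-((Real.sqrt δ)⁻¹ * (x 0 - sB 0) - (Real.sqrt δ)⁻¹ * (y 0 - sB 0))^2)
        * Real.exp (-((Real.sqrt δ)⁻¹ * (x 1 - sB 1) - (Real.sqrt δ)⁻¹ * (y 1 - sB 1))^2)
        = Real.exp (-‖x - y‖^2/δ) := by
      rw [← Real.exp_add]
      congr 1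
      rw [hn, ← hd]
      have hxy : ∀ i : Fin 2, (x - y) i = x i - y i := fun i => by
        simp [PiLp.sub_apply]
      field_simp
      rw [Real.sqrt_sq hδs.le]
      ring
    rw [hval] at hprod
    have hfe : (fun α : ℕ×ℕ =>
        (hermiteF α.1 ((Real.sqrt δ)⁻¹ * (x 0 - sB 0)) *
          ((Real.sqrt δ)⁻¹ * (y 0 - sB 0)) ^ α.1 / (α.1.factorial : ℝ)) *
        (hermiteF α.2 ((Real.sqrt δ)⁻¹ * (x 1 - sB 1)) *
          ((Real.sqrt δ)⁻¹ * (y 1 - sB 1)) ^ α.2 / (α.2.factorial : ℝ)))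
        = fun α : ℕ×ℕ => hermite2 α ((Real.sqrt δ)⁻¹ • (x - sB)) *
            mpow ((Real.sqrt δ)⁻¹ • (y - sB)) α / mfact α := by
      funext α
      unfold hermite2 mpow mfact
      rw [hcoord, hcoord, hcoord, hcoord]
      ring
    rwa [hfe] at hprod
  -- summable majorant
  set bb : ℕ → ℝ := fun n => 1.09 * r ^ n / Real.sqrt (n.factorial : ℝ) with hbbdef
  have hbb0 : ∀ n, 0 ≤ bb n := fun n => by rw [hbbdef]; positivity
  have hb_sum : Summable bb := by
    have h := (HermiteProof.summable_aux hr.le).mul_left (1.09 : ℝ)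
    exact h.congr fun n => (mul_div_assoc (1.09:ℝ) (r^n) _).symm
  have hbb_sum : Summable fun α : ℕ×ℕ => bb α.1 * bb α.2 :=
    Summable.mul_of_nonneg hb_sum hb_sum (fun n => hbb0 n) (fun n => hbb0 n)
  have hmf : ∀ α : ℕ×ℕ, (0:ℝ) < mfact α := by
    intro α
    unfold mfact
    have h1 : (0:ℝ) < (α.1.factorial : ℝ) := by exact_mod_cast α.1.factorial_pos
    have h2 : (0:ℝ) < (α.2.factorial : ℝ) := by exact_mod_cast α.2.factorial_pos
    positivity
  have hcore : ∀ (α : ℕ×ℕ) (w : E2),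
      |hermite2 α w| * ((r/2)^α.1 * (r/2)^α.2) / mfact α ≤ bb α.1 * bb α.2 := by
    intro α w
    unfold hermite2 mfact
    have hf1 : (0:ℝ) < (α.1.factorial : ℝ) := by exact_mod_cast α.1.factorial_pos
    have hf2 : (0:ℝ) < (α.2.factorial : ℝ) := by exact_mod_cast α.2.factorial_pos
    rw [abs_mul]
    calc |hermiteF α.1 (w 0)| * |hermiteF α.2 (w 1)| * ((r/2)^α.1 * (r/2)^α.2)
          / ((α.1.factorial : ℝ) * (α.2.factorial : ℝ))
        = (|hermiteF α.1 (w 0)| * ((r/2)^α.1 / (α.1.factorial : ℝ))) *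
          (|hermiteF α.2 (w 1)| * ((r/2)^α.2 / (α.2.factorial : ℝ))) := by
          field_simp
      _ ≤ bb α.1 * bb α.2 := by
          rw [hbbdef]
          exact mul_le_mul (HermiteProof.cb1 hr _ _) (HermiteProof.cb1 hr _ _) (by positivity) (by positivity)
  have hmpowB : ∀ (α : ℕ×ℕ) (y : E2), y ∈ B →
      |mpow ((Real.sqrt δ)⁻¹ • (y - sB)) α| ≤ (r/2)^α.1 * (r/2)^α.2 := by
    intro α y hy
    obtain ⟨hy0, hy1⟩ := hy
    unfold mpow
    rw [abs_mul, abs_pow, abs_pow, hcoord, hcoord]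
    have key : ∀ i : Fin 2, |y i - sB i| ≤ r * Real.sqrt δ / 2 →
        |(Real.sqrt δ)⁻¹ * (y i - sB i)| ≤ r/2 := by
      intro i hi
      rw [abs_mul, abs_inv, abs_of_pos hδs, inv_mul_le_iff₀ hδs]
      calc |y i - sB i| ≤ r * Real.sqrt δ / 2 := hi
        _ = Real.sqrt δ * (r/2) := by ring
    exact mul_le_mul (pow_le_pow_left₀ (abs_nonneg _) (key 0 hy0) _)
      (pow_le_pow_left₀ (abs_nonneg _) (key 1 hy1) _) (by positivity) (by positivity)
  have hvcont : ∀ α : ℕ×ℕ, Continuous fun y : E2 => mpow ((Real.sqrt δ)⁻¹ • (y - sB)) α := by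
    intro α
    have hc : Continuous fun y : E2 => (Real.sqrt δ)⁻¹ • (y - sB) := by
      fun_prop
    unfold mpow
    fun_prop
  have hfabs : IntegrableOn (fun y => |f y|) B := hf.abs
  have hQf0 : 0 ≤ ∫ y in B, |f y| := integral_nonneg fun y => abs_nonneg _
  have hQ0 : 0 ≤ sourceMass B f q :=
    add_nonneg hQf0 (Finset.sum_nonneg fun j _ => abs_nonneg _)
  have hIS : ∀ α : ℕ×ℕ, Integrable (fun y => mpow ((Real.sqrt δ)⁻¹ • (y - sB)) α * f y)
      (volume.restrict B) := by
    intro α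
    apply Integrable.bdd_mul (c := (r/2)^α.1 * (r/2)^α.2) hf (hvcont α).aestronglyMeasurable
    filter_upwards [ae_restrict_mem hBmeas] with y hy
    rw [Real.norm_eq_abs]
    exact hmpowB α y hy
  have hcoef_bound : ∀ α : ℕ×ℕ, |hermiteCoef δ sB B f Y q α| ≤
      (r/2)^α.1 * (r/2)^α.2 / mfact α * sourceMass B f q := by
    intro α
    have hmfα := hmf α
    have hI : |∫ y in B, mpow ((Real.sqrt δ)⁻¹ • (y - sB)) α * f y| ≤
        (r/2)^α.1 * (r/2)^α.2 * ∫ y in B, |f y| := by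
      have h1 := norm_integral_le_integral_norm (μ := volume.restrict B)
        (f := fun y => mpow ((Real.sqrt δ)⁻¹ • (y - sB)) α * f y)
      simp only [Real.norm_eq_abs] at h1
      refine h1.trans ?_
      rw [← integral_const_mul]
      apply integral_mono_of_nonneg (Filter.Eventually.of_forall fun y => abs_nonneg _)
        (hfabs.const_mul _)
      filter_upwards [ae_restrict_mem hBmeas] with y hy
      rw [abs_mul]
      exact mul_le_mul_of_nonneg_right (hmpowB α y hy) (abs_nonneg _)
    have hS : |∑ j, mpow ((Real.sqrt δ)⁻¹ • (Y j - sB)) α * q j| ≤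
        (r/2)^α.1 * (r/2)^α.2 * ∑ j, |q j| := by
      refine (Finset.abs_sum_le_sum_abs _ _).trans ?_
      rw [Finset.mul_sum]
      apply Finset.sum_le_sum
      intro j _
      rw [abs_mul]
      exact mul_le_mul_of_nonneg_right (hmpowB α (Y j) (hY j)) (abs_nonneg _)
    unfold hermiteCoef sourceMass
    rw [abs_mul, abs_div, abs_one, abs_of_pos hmfα]
    calc 1 / mfact α * |(∫ y in B, mpow ((Real.sqrt δ)⁻¹ • (y - sB)) α * f y) +
          ∑ j, mpow ((Real.sqrt δ)⁻¹ • (Y j - sB)) α * q j|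
        ≤ 1 / mfact α * (((r/2)^α.1 * (r/2)^α.2 * ∫ y in B, |f y|) +
            ((r/2)^α.1 * (r/2)^α.2 * ∑ j, |q j|)) := by
          apply mul_le_mul_of_nonneg_left _ (by positivity)
          exact (abs_add_le _ _).trans (add_le_add hI hS)
      _ = (r/2)^α.1 * (r/2)^α.2 / mfact α * ((∫ y in B, |f y|) + ∑ j, |q j|) := by
          field_simp
  have hterm_le : ∀ (x : E2) (α : ℕ×ℕ),
      |hermiteCoef δ sB B f Y q α * hermite2 α ((Real.sqrt δ)⁻¹ • (x - sB))| ≤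
        sourceMass B f q * (bb α.1 * bb α.2) := by
    intro x α
    rw [abs_mul]
    calc |hermiteCoef δ sB B f Y q α| * |hermite2 α ((Real.sqrt δ)⁻¹ • (x - sB))|
        ≤ ((r/2)^α.1 * (r/2)^α.2 / mfact α * sourceMass B f q) *
            |hermite2 α ((Real.sqrt δ)⁻¹ • (x - sB))| :=
          mul_le_mul_of_nonneg_right (hcoef_bound α) (abs_nonneg _)
      _ = sourceMass B f q * (|hermite2 α ((Real.sqrt δ)⁻¹ • (x - sB))| *
            ((r/2)^α.1 * (r/2)^α.2) / mfact α) := by ring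
      _ ≤ sourceMass B f q * (bb α.1 * bb α.2) :=
          mul_le_mul_of_nonneg_left (hcore α _) hQ0
  have parta : ∀ x : E2, Summable fun α : ℕ × ℕ =>
      |hermiteCoef δ sB B f Y q α * hermite2 α ((Real.sqrt δ)⁻¹ • (x - sB))| := by
    intro x
    exact Summable.of_nonneg_of_le (fun α => abs_nonneg _) (hterm_le x)
      (hbb_sum.mul_left (sourceMass B f q))
  -- part (b): the expansion of the field
  have partb : ∀ x : E2, gaussField δ B f Y q x =
      ∑' α : ℕ × ℕ, hermiteCoef δ sB B f Y q α * hermite2 α ((Real.sqrt δ)⁻¹ • (x - sB)) := by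
    intro x
    set u' : E2 := (Real.sqrt δ)⁻¹ • (x - sB) with hu'
    set F : (ℕ×ℕ) → E2 → ℝ := fun α y =>
      hermite2 α u' * mpow ((Real.sqrt δ)⁻¹ • (y - sB)) α / mfact α * f y with hFdef
    have hGbound : ∀ (α : ℕ×ℕ) (y : E2), y ∈ B →
        |hermite2 α u' * mpow ((Real.sqrt δ)⁻¹ • (y - sB)) α / mfact α|
          ≤ bb α.1 * bb α.2 := by
      intro α y hy
      rw [abs_div, abs_of_pos (hmf α), abs_mul]
      refine le_trans ?_ (hcore α u')
      exact (div_le_div_iff_of_pos_right (hmf α)).mpr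
        (mul_le_mul_of_nonneg_left (hmpowB α y hy) (abs_nonneg _))
    have hFint : ∀ α : ℕ×ℕ, Integrable (F α) (volume.restrict B) := by
      intro α
      apply Integrable.bdd_mul (c := bb α.1 * bb α.2) hf
      · apply Continuous.aestronglyMeasurable
        exact (continuous_const.mul (hvcont α)).div_const _
      · filter_upwards [ae_restrict_mem hBmeas] with y hy
        rw [Real.norm_eq_abs]
        exact hGbound α y hy
    have hFnormle : ∀ α : ℕ×ℕ, (∫ y in B, ‖F α y‖) ≤
        (∫ y in B, |f y|) * (bb α.1 * bb α.2) := by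
      intro α
      rw [mul_comm]
      rw [← integral_const_mul]
      apply integral_mono_of_nonneg (Filter.Eventually.of_forall fun y => norm_nonneg _)
        (hfabs.const_mul _)
      filter_upwards [ae_restrict_mem hBmeas] with y hy
      rw [Real.norm_eq_abs, hFdef]
      simp only []
      rw [abs_mul]
      exact mul_le_mul_of_nonneg_right (hGbound α y hy) (abs_nonneg _)
    have hFnorm_sum : Summable fun α : ℕ×ℕ => ∫ y in B, ‖F α y‖ :=
      Summable.of_nonneg_of_le (fun α => integral_nonneg fun y => norm_nonneg _)
        hFnormle (hbb_sum.mul_left _)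
    have hswap := integral_tsum_of_summable_integral_norm hFint hFnorm_sum
    have hsumF : Summable fun α : ℕ×ℕ => ∫ y in B, F α y :=
      (hasSum_integral_of_summable_integral_norm hFint hFnorm_sum).summable
    have hpt : ∀ y : E2, (∑' α : ℕ×ℕ, F α y) = Real.exp (-‖x - y‖^2/δ) * f y := by
      intro y
      rw [hFdef]
      simp only []
      rw [tsum_mul_right, (expand x y).tsum_eq]
    have hIeq : (∫ y in B, Real.exp (-‖x - y‖^2/δ) * f y) = ∑' α : ℕ×ℕ, ∫ y in B, F α y := by
      rw [hswap]
      exact integral_congr_ae (Filter.Eventually.of_forall fun y => (hpt y).symm)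
    have hptsum : ∀ j, Summable fun α : ℕ×ℕ =>
        hermite2 α u' * mpow ((Real.sqrt δ)⁻¹ • (Y j - sB)) α / mfact α * q j :=
      fun j => ((expand x (Y j)).summable).mul_right _
    have hpteq : (∑ j, q j * Real.exp (-‖x - Y j‖^2/δ)) =
        ∑' α : ℕ×ℕ, ∑ j, hermite2 α u' * mpow ((Real.sqrt δ)⁻¹ • (Y j - sB)) α / mfact α * q j := by
      rw [Summable.tsum_finsetSum (fun j _ => hptsum j)]
      refine Finset.sum_congr rfl fun j _ => ?_
      rw [tsum_mul_right, (expand x (Y j)).tsum_eq, mul_comm]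
    have hsum2 : Summable fun α : ℕ×ℕ =>
        ∑ j, hermite2 α u' * mpow ((Real.sqrt δ)⁻¹ • (Y j - sB)) α / mfact α * q j :=
      summable_sum (s := Finset.univ) fun j _ => hptsum j
    rw [gaussField, hIeq, hpteq, ← Summable.tsum_add hsumF hsum2]
    apply tsum_congr
    intro α
    have hInt1 : (∫ y in B, F α y) = hermite2 α u' / mfact α *
        ∫ y in B, mpow ((Real.sqrt δ)⁻¹ • (y - sB)) α * f y := by
      rw [← integral_const_mul]
      apply integral_congr_ae
      filter_upwards with y
      rw [hFdef]
      simp only []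
      ring
    rw [hInt1]
    unfold hermiteCoef
    have hps : ∑ j, hermite2 α u' * mpow ((Real.sqrt δ)⁻¹ • (Y j - sB)) α / mfact α * q j
        = hermite2 α u' / mfact α * ∑ j, mpow ((Real.sqrt δ)⁻¹ • (Y j - sB)) α * q j := by
      rw [Finset.mul_sum]
      exact Finset.sum_congr rfl fun j _ => by ring
    rw [hps]
    ring
  -- part (c): the truncation error bound
  have partc : ∀ (p : ℕ) (x : E2),
      |∑' α : ℕ × ℕ,
          if p ≤ α.1 ∨ p ≤ α.2 then
            hermiteCoef δ sB B f Y q α * hermite2 α ((Real.sqrt δ)⁻¹ • (x - sB))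
          else 0| ≤
        1.09 ^ 2 * sourceMass B f q * (2 * Sr r p + Tr r p) * Tr r p := by
    intro p x
    set w : (ℕ×ℕ) → ℝ := fun α =>
      hermiteCoef δ sB B f Y q α * hermite2 α ((Real.sqrt δ)⁻¹ • (x - sB)) with hw
    set Q := sourceMass B f q with hQ
    -- summability of pieces
    have hwsum : Summable fun α : ℕ×ℕ => |w α| := parta x
    have hite_abs : Summable fun α : ℕ×ℕ => |if p ≤ α.1 ∨ p ≤ α.2 then w α else 0| := by
      refine Summable.of_nonneg_of_le (fun α => abs_nonneg _) (fun α => ?_) hwsum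
      by_cases h : p ≤ α.1 ∨ p ≤ α.2 <;> simp [h]
    have hite : Summable fun α : ℕ×ℕ => if p ≤ α.1 ∨ p ≤ α.2 then w α else 0 :=
      hite_abs.of_abs
    -- |tsum| ≤ tsum of abs
    have h1 : |∑' α : ℕ×ℕ, if p ≤ α.1 ∨ p ≤ α.2 then w α else 0|
        ≤ ∑' α : ℕ×ℕ, |if p ≤ α.1 ∨ p ≤ α.2 then w α else 0| := by
      have := norm_tsum_le_tsum_norm (f := fun α : ℕ×ℕ => if p ≤ α.1 ∨ p ≤ α.2 then w α else 0)
        (by simpa [Real.norm_eq_abs] using hite_abs)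
      simpa [Real.norm_eq_abs] using this
    -- bound termwise by indicator of Q * bb * bb
    have hQbb_sum : Summable fun α : ℕ×ℕ => if p ≤ α.1 ∨ p ≤ α.2 then bb α.1 * bb α.2 else 0 := by
      refine Summable.of_nonneg_of_le (fun α => ?_) (fun α => ?_) hbb_sum
      · by_cases h : p ≤ α.1 ∨ p ≤ α.2 <;>
          simp [h, mul_nonneg (hbb0 _) (hbb0 _)]
      · by_cases h : p ≤ α.1 ∨ p ≤ α.2 <;>
          simp [h, mul_nonneg (hbb0 _) (hbb0 _)]
    have h2 : (∑' α : ℕ×ℕ, |if p ≤ α.1 ∨ p ≤ α.2 then w α else 0|)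
        ≤ Q * ∑' α : ℕ×ℕ, (if p ≤ α.1 ∨ p ≤ α.2 then bb α.1 * bb α.2 else 0) := by
      rw [← tsum_mul_left]
      apply Summable.tsum_le_tsum _ hite_abs (hQbb_sum.mul_left Q)
      intro α
      by_cases h : p ≤ α.1 ∨ p ≤ α.2
      · simp only [h, if_true, mul_ite, mul_zero]
        exact (hterm_le x α)
      · simp [h]
    -- the indicator sums
    set s1 : ℕ → ℝ := fun m => if p ≤ m then bb m else 0 with hs1
    set s2 : ℕ → ℝ := fun m => if m < p then bb m else 0 with hs2
    have hs1sum : Summable s1 := by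
      refine Summable.of_nonneg_of_le (fun m => ?_) (fun m => ?_) hb_sum <;>
        by_cases h : p ≤ m <;> simp [hs1, h, hbb0 m]
    have hs2sum : Summable s2 := by
      refine Summable.of_nonneg_of_le (fun m => ?_) (fun m => ?_) hb_sum <;>
        by_cases h : m < p <;> simp [hs2, h, hbb0 m]
    set A := ∑ m ∈ Finset.range p, bb m with hA
    set Tt := ∑' m : ℕ, bb (m + p) with hTt
    have hA0 : 0 ≤ A := Finset.sum_nonneg fun m _ => hbb0 m
    have hTt0 : 0 ≤ Tt := tsum_nonneg fun m => hbb0 _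
    have hbbtot : A + Tt = ∑' m, bb m := Summable.sum_add_tsum_nat_add p hb_sum
    have hs2val : (∑' m, s2 m) = A := by
      rw [tsum_eq_sum (s := Finset.range p) (fun m hm => by
        simp [hs2, Finset.mem_range.not.mp hm])]
      exact Finset.sum_congr rfl fun m hm => by simp [hs2, Finset.mem_range.mp hm]
    have hs1val : (∑' m, s1 m) = Tt := by
      have hpt : ∀ m, s1 m + s2 m = bb m := by
        intro m
        by_cases h : p ≤ m
        · simp [hs1, hs2, h, Nat.lt_of_lt_of_le, not_lt_of_ge h]
        · simp [hs1, hs2, h, Nat.lt_of_not_le h]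
      have := Summable.tsum_add hs1sum hs2sum
      rw [funext hpt] at this
      rw [← hbbtot, hs2val] at this
      linarith
    have hprod1 : Summable (fun α : ℕ×ℕ => s1 α.1 * bb α.2) := by
      refine Summable.of_nonneg_of_le (fun α => ?_) (fun α => ?_) hbb_sum <;>
        by_cases h : p ≤ α.1 <;>
          simp [hs1, h, hbb0, mul_nonneg (hbb0 _) (hbb0 _)]
    have hprod2 : Summable (fun α : ℕ×ℕ => s2 α.1 * s1 α.2) := by
      refine Summable.of_nonneg_of_le (fun α => ?_) (fun α => ?_) hbb_sum
      · by_cases h : α.1 < p <;> by_cases h' : p ≤ α.2 <;>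
          simp [hs1, hs2, h, h', mul_nonneg (hbb0 _) (hbb0 _)]
      · by_cases h : α.1 < p <;> by_cases h' : p ≤ α.2 <;>
          simp [hs1, hs2, h, h', mul_nonneg (hbb0 _) (hbb0 _), hbb0]
    have ht1 := (hs1sum.hasSum.mul hb_sum.hasSum hprod1).tsum_eq
    have ht2 := (hs2sum.hasSum.mul hs1sum.hasSum hprod2).tsum_eq
    have hsplit : ∀ α : ℕ×ℕ, (if p ≤ α.1 ∨ p ≤ α.2 then bb α.1 * bb α.2 else 0)
        = s1 α.1 * bb α.2 + s2 α.1 * s1 α.2 := by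
      intro α
      by_cases h1 : p ≤ α.1 <;> by_cases h2 : p ≤ α.2 <;>
        simp [hs1, hs2, h1, h2, not_le.mp, not_lt.mpr, Nat.lt_of_not_le]
    have htot : (∑' α : ℕ×ℕ, if p ≤ α.1 ∨ p ≤ α.2 then bb α.1 * bb α.2 else 0)
        = Tt * (A + Tt) + A * Tt := by
      rw [funext hsplit, Summable.tsum_add hprod1 hprod2, ht1, ht2, hs1val, hs2val, ← hbbtot]
    have hTtval : Tt = 1.09 * Tr r p := by
      rw [hTt, Tr, ← tsum_mul_left]
      exact tsum_congr fun n => mul_div_assoc _ _ _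
    have hTr0 : 0 ≤ Tr r p := by
      have h := hTt0
      rw [hTtval] at h
      linarith
    have hSr0 : 0 ≤ Sr r p := Finset.sum_nonneg fun n _ => by positivity
    have hAle : A ≤ 1.09 * Sr r p := by
      rw [hA, Sr, Finset.mul_sum]
      calc ∑ m ∈ Finset.range p, bb m
          ≤ ∑ m ∈ Finset.range (p+1), bb m :=
            Finset.sum_le_sum_of_subset_of_nonneg
              (Finset.range_subset_range.mpr (Nat.le_succ p)) (fun i _ _ => hbb0 i)
        _ = ∑ m ∈ Finset.range (p+1), 1.09 * (r ^ m / Real.sqrt (m.factorial : ℝ)) :=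
            Finset.sum_congr rfl fun m _ => mul_div_assoc _ _ _
    calc |∑' α : ℕ×ℕ, if p ≤ α.1 ∨ p ≤ α.2 then w α else 0|
        ≤ ∑' α : ℕ×ℕ, |if p ≤ α.1 ∨ p ≤ α.2 then w α else 0| := h1
      _ ≤ Q * ∑' α : ℕ×ℕ, (if p ≤ α.1 ∨ p ≤ α.2 then bb α.1 * bb α.2 else 0) := h2
      _ = Q * (Tt * (A + Tt) + A * Tt) := by rw [htot]
      _ ≤ Q * ((1.09 * Tr r p) * (1.09 * Sr r p + 1.09 * Tr r p)
            + (1.09 * Sr r p) * (1.09 * Tr r p)) := by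
          apply mul_le_mul_of_nonneg_left _ hQ0
          rw [hTtval]
          nlinarith [hAle, hTr0, hA0, hSr0]
      _ = 1.09 ^ 2 * Q * (2 * Sr r p + Tr r p) * Tr r p := by ring
  exact ⟨parta, partb, partc⟩
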